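/- With Q, R, J the simultaneously defined syntactic classes, for every θ ∈ J, intuitionistic logic proves θ^E → ¬_E¬_E θ, i.e. θ^E → ((θ → E) → E). -/

import Mathlib

/-- First-order formulas over a domain `α` with atomic propositions indexed by `ι`,
quantifiers rendered via higher-order abstract syntax. -/
inductive Fml (α ι : Type) : Type where
  | atom : ι → Fml α ι
  | bot : Fml α ι
  | and : Fml α ι → Fml α ι → Fml α ι
  | or : Fml α ι → Fml α ι → Fml α ι
  | imp : Fml α ι → Fml α ι → Fml α ι
  | all : (α → Fml α ι) → Fml α ι
  | ex : (α → Fml α ι) → Fml α ι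

/-- Standard semantic evaluation of a formula, given an interpretation `v` of the atoms. -/
def Fml.eval {α ι : Type} (v : ι → Prop) : Fml α ι → Prop
  | .atom i => v i
  | .bot => False
  | .and φ ψ => φ.eval v ∧ ψ.eval v
  | .or φ ψ => φ.eval v ∨ ψ.eval v
  | .imp φ ψ => φ.eval v → ψ.eval v
  | .all f => ∀ x, (f x).eval v
  | .ex f => ((∃ x, (f x).eval v))

/-- Semantic evaluation of the E-negative (Gentzen–Gödel style) translation `φ^E`:
`P^E := ¬_E¬_E P` for atoms, `⊥^E := E`, commuting with `∧`, `→`, `∀`, and with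
`¬_E¬_E` prefixed to `∨` and `∃`, where `¬_E θ := θ → E`. -/
def Fml.evalE {α ι : Type} (v : ι → Prop) (E : Prop) : Fml α ι → Prop
  | .atom i => (v i → E) → E
  | .bot => E
  | .and φ ψ => φ.evalE v E ∧ ψ.evalE v E
  | .or φ ψ => ((φ.evalE v E ∨ ψ.evalE v E) → E) → E
  | .imp φ ψ => φ.evalE v E → ψ.evalE v E
  | .all f => ∀ x, (f x).evalE v E
  | .ex f => ((∃ x, (f x).evalE v E) → E) → E

mutual
  /-- The syntactic class `Q`. -/
  inductive InQ {α ι : Type} : Fml α ι → Prop where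
    | bot : InQ .bot
    | atom (i : ι) : InQ (.atom i)
    | and {φ ψ} : InQ φ → InQ ψ → InQ (.and φ ψ)
    | or {φ ψ} : InQ φ → InQ ψ → InQ (.or φ ψ)
    | ex {f} : (∀ x, InQ (f x)) → InQ (.ex f)
    | all {f} : (∀ x, InQ (f x)) → InQ (.all f)
    | imp {φ ψ} : InJ φ → InQ ψ → InQ (.imp φ ψ)

  /-- The syntactic class `R`. -/
  inductive InR {α ι : Type} : Fml α ι → Prop where
    | bot : InR .bot
    | and {φ ψ} : InR φ → InR ψ → InR (.and φ ψ)
    | or {φ ψ} : InR φ → InR ψ → InR (.or φ ψ)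
    | all {f} : (∀ x, InR (f x)) → InR (.all f)
    | imp {φ ψ} : InJ φ → InR ψ → InR (.imp φ ψ)

  /-- The syntactic class `J`. -/
  inductive InJ {α ι : Type} : Fml α ι → Prop where
    | bot : InJ .bot
    | atom (i : ι) : InJ (.atom i)
    | and {φ ψ} : InJ φ → InJ ψ → InJ (.and φ ψ)
    | or {φ ψ} : InJ φ → InJ ψ → InJ (.or φ ψ)
    | ex {f} : (∀ x, InJ (f x)) → InJ (.ex f)
    | imp {φ ψ} : InR φ → InJ ψ → InJ (.imp φ ψ)
end

/-! The implication case `φ → ψ` of `J` (with `φ ∈ R`) needs a converse for `R`: from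
`¬_E(φ → C)` one gets `φ^E`, for every `C`. The conclusion `C` has to vary because the
`∧`-case of `R` curries one conjunct into it; the `→`-case of `J` uses `C := ψ`. -/

section

variable {α ι : Type} {v : ι → Prop} {E : Prop}

mutual

theorem InR.evalE_of_imp_imp {φ : Fml α ι} (hφ : InR φ) (C : Prop)
    (k : (φ.eval v → C) → E) : φ.evalE v E :=
  match φ, hφ with
  | _, .bot => k False.elim
  | _, .and hφ hψ =>
    ⟨hφ.evalE_of_imp_imp (_ → C) fun g => k fun p => g p.1 p.2,
      hψ.evalE_of_imp_imp (_ → C) fun g => k fun p => g p.2 p.1⟩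
  | _, .or hφ hψ => fun m =>
    m <| .inl <| hφ.evalE_of_imp_imp C fun f =>
      m <| .inr <| hψ.evalE_of_imp_imp C fun g => k (·.elim f g)
  | _, .all hf => fun x => (hf x).evalE_of_imp_imp C fun t => k fun u => t (u x)
  | _, .imp hφ hψ => fun a =>
    hψ.evalE_of_imp_imp C fun s => hφ.imp_imp_of_evalE a fun x => k fun t => s (t x)

theorem InJ.imp_imp_of_evalE {θ : Fml α ι} (hθ : InJ θ) (h : θ.evalE v E) :
    (θ.eval v → E) → E :=
  match θ, hθ with
  | _, .bot => fun _ => h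
  | _, .atom _ => h
  | _, .and hφ hψ => fun k =>
    hφ.imp_imp_of_evalE h.1 fun a => hψ.imp_imp_of_evalE h.2 fun b => k ⟨a, b⟩
  | _, .or hφ hψ => fun k =>
    h fun d => d.elim (fun a => hφ.imp_imp_of_evalE a (k ∘ .inl))
      (fun b => hψ.imp_imp_of_evalE b (k ∘ .inr))
  | _, .ex hf => fun k => h fun ⟨x, a⟩ => (hf x).imp_imp_of_evalE a fun y => k ⟨x, y⟩
  | _, .imp hφ hψ => fun k =>
    hψ.imp_imp_of_evalE (h (hφ.evalE_of_imp_imp _ k)) fun y => k fun _ => y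

end

end

/-- For `θ ∈ J`, intuitionistic logic proves `θ^E → ¬_E¬_E θ`. -/
theorem stmt15 {α ι : Type} (θ : Fml α ι) (hθ : InJ θ) (v : ι → Prop) (E : Prop) :
    θ.evalE v E → ((θ.eval v → E) → E) := hθ.imp_imp_of_evalE
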